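/- arXiv:1903.05302 — 7 statements merged into one kernel-verified Lean document; each statement's English description precedes it below -/
import Mathlib

section
/- In an absolutely ordered space, the orthogonal decomposition is unique: if v = v₁ − v₂ with v₁ ⊥ v₂ (i.e., v₁, v₂ ∈ V⁺ and |v₁ − v₂| = v₁ + v₂), then v₁ = v⁺ := ½(|v| + v) and v₂ = v⁻ := ½(|v| − v). -/
/-- An absolutely ordered space: a real ordered vector space `(V, P)` together with an
absolute value map `abs : V → P` satisfying axioms (a)–(e). -/
structure AbsOrderedSpace (V : Type*) [AddCommGroup V] [Module ℝ V] where
  /-- the positive cone -/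
  P : Set V
  add_mem : ∀ u ∈ P, ∀ v ∈ P, u + v ∈ P
  smul_mem : ∀ (k : ℝ), 0 ≤ k → ∀ v ∈ P, k • v ∈ P
  /-- the absolute value map -/
  abs : V → V
  abs_mem : ∀ v, abs v ∈ P
  /-- (a) -/
  abs_of_mem : ∀ v ∈ P, abs v = v
  /-- (b) -/
  abs_add_mem : ∀ v, abs v + v ∈ P
  abs_sub_mem : ∀ v, abs v - v ∈ P
  /-- (c) -/
  abs_smul : ∀ (k : ℝ) (v : V), abs (k • v) = |k| • abs v
  /-- (d) -/
  axiom_d : ∀ u v w : V, abs (u - v) = u + v → w ∈ P → v - w ∈ P → abs (u - w) = u + w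
  /-- (e) -/
  axiom_e₁ : ∀ u v w : V, abs (u - v) = u + v → abs (u - w) = u + w →
    abs (u - abs (v + w)) = u + abs (v + w)
  axiom_e₂ : ∀ u v w : V, abs (u - v) = u + v → abs (u - w) = u + w →
    abs (u - abs (v - w)) = u + abs (v - w)
/-- Uniqueness of the orthogonal decomposition. -/
theorem orthogonal_decomposition_unique {V : Type*} [AddCommGroup V] [Module ℝ V]
    (A : AbsOrderedSpace V) (v v₁ v₂ : V) (h₁ : v₁ ∈ A.P) (h₂ : v₂ ∈ A.P)
    (horth : A.abs (v₁ - v₂) = v₁ + v₂) (hv : v = v₁ - v₂) :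
    v₁ = ((1 : ℝ) / 2) • (A.abs v + v) ∧ v₂ = ((1 : ℝ) / 2) • (A.abs v - v) := by
  subst hv
  rw [horth]
  constructor <;> module
end

section
/- Let V and W be absolutely ordered spaces and φ : V → W a linear map. Then φ is absolute value preserving (φ(|v|) = |φ(v)| for all v) if and only if φ is positive and φ(v₁) ⊥ φ(v₂) whenever v₁, v₂ ∈ V⁺ with v₁ ⊥ v₂. -/
/-- A linear map between absolutely ordered spaces is absolute value preserving iff it is
positive and preserves orthogonality of positive elements. -/
theorem absPreserving_iff_positive_orth {V W : Type*} [AddCommGroup V] [Module ℝ V]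
    [AddCommGroup W] [Module ℝ W] (A : AbsOrderedSpace V) (B : AbsOrderedSpace W)
    (φ : V →ₗ[ℝ] W) :
    (∀ v : V, φ (A.abs v) = B.abs (φ v)) ↔
      ((∀ v ∈ A.P, φ v ∈ B.P) ∧
        ∀ v₁ ∈ A.P, ∀ v₂ ∈ A.P, A.abs (v₁ - v₂) = v₁ + v₂ →
          B.abs (φ v₁ - φ v₂) = φ v₁ + φ v₂) := by
  constructor
  · intro h
    refine ⟨fun v hv => ?_, fun v₁ h₁ v₂ h₂ horth => ?_⟩
    · have := h v
      rw [A.abs_of_mem v hv] at this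
      rw [this]
      exact B.abs_mem _
    · have := h (v₁ - v₂)
      rw [horth, map_sub] at this
      rw [← this, map_add]
  · rintro ⟨hpos, horth⟩ v
    set p : V := (1/2 : ℝ) • (A.abs v + v) with hp
    set q : V := (1/2 : ℝ) • (A.abs v - v) with hq
    have hpP : p ∈ A.P := A.smul_mem _ (by norm_num) _ (A.abs_add_mem v)
    have hqP : q ∈ A.P := A.smul_mem _ (by norm_num) _ (A.abs_sub_mem v)
    have hsub : p - q = v := by
      rw [hp, hq, ← smul_sub]
      module
    have hadd : p + q = A.abs v := by
      rw [hp, hq, ← smul_add]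
      module
    have horthpq : A.abs (p - q) = p + q := by rw [hsub, hadd]
    have := horth p hpP q hqP horthpq
    rw [← map_sub, ← map_add, hsub, hadd] at this
    exact this.symm
end

section
/- Let V and W be absolutely ordered spaces and φ : V → W a linear absolute value preserving map. Then ker(φ) is an absolutely order ideal of V; in particular |v| ∈ ker(φ) whenever v ∈ ker(φ), and ker(φ) = ker⁺(φ) − ker⁺(φ) where ker⁺(φ) = {v ∈ V⁺ : φ(v) = 0}. -/
/-- The kernel of an absolute value preserving linear map is an absolutely order ideal:
it is closed under the absolute value, it is an order ideal, and
`ker φ = ker⁺ φ − ker⁺ φ`. -/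
theorem ker_absOrderIdeal {V W : Type*} [AddCommGroup V] [Module ℝ V]
    [AddCommGroup W] [Module ℝ W] (A : AbsOrderedSpace V) (B : AbsOrderedSpace W)
    (φ : V →ₗ[ℝ] W) (hφ : ∀ v : V, φ (A.abs v) = B.abs (φ v)) :
    (∀ v : V, φ v = 0 → φ (A.abs v) = 0) ∧
    (∀ v w : V, v ∈ A.P → w - v ∈ A.P → φ w = 0 → φ v = 0) ∧
    (∀ v : V, φ v = 0 → ∃ a b : V, a ∈ A.P ∧ b ∈ A.P ∧ φ a = 0 ∧ φ b = 0 ∧ v = a - b) := by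

  -- abs of 0 is 0
  have habs0 : B.abs 0 = 0 := by
    have := B.abs_smul 0 0
    simpa using this
  have h1 : ∀ v : V, φ v = 0 → φ (A.abs v) = 0 := by
    intro v hv
    rw [hφ, hv, habs0]
  refine ⟨h1, ?_, ?_⟩
  · intro v w hv hwv hw
    -- φ v ∈ B.P and -φ v ∈ B.P
    have h2 : φ v ∈ B.P := by
      have : φ v = B.abs (φ v) := by
        rw [← hφ, A.abs_of_mem v hv]
      rw [this]; exact B.abs_mem _
    have h3 : -φ v ∈ B.P := by
      have : φ (w - v) ∈ B.P := by
        have : φ (w - v) = B.abs (φ (w - v)) := by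
          rw [← hφ, A.abs_of_mem _ hwv]
        rw [this]; exact B.abs_mem _
      simpa [map_sub, hw] using this
    -- pointedness
    have hx : B.abs (φ v) = φ v := B.abs_of_mem _ h2
    have hnx : B.abs (-φ v) = -φ v := B.abs_of_mem _ h3
    have : B.abs (-φ v) = B.abs (φ v) := by
      have := B.abs_smul (-1) (φ v)
      simpa using this
    have h2x : φ v = -φ v := by
      calc φ v = B.abs (φ v) := hx.symm
        _ = B.abs (-φ v) := this.symm
        _ = -φ v := hnx
    have : (2 : ℝ) • φ v = 0 := by
      rw [two_smul]
      nth_rewrite 2 [h2x]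
      abel
    have := smul_eq_zero.mp this
    rcases this with h | h
    · norm_num at h
    · exact h
  · intro v hv
    refine ⟨(2⁻¹ : ℝ) • (A.abs v + v), (2⁻¹ : ℝ) • (A.abs v - v), ?_, ?_, ?_, ?_, ?_⟩
    · exact A.smul_mem _ (by norm_num) _ (A.abs_add_mem v)
    · exact A.smul_mem _ (by norm_num) _ (A.abs_sub_mem v)
    · simp [map_smul, map_add, hv, h1 v hv]
    · simp [map_smul, map_sub, hv, h1 v hv]
    · rw [← smul_sub]
      have : A.abs v + v - (A.abs v - v) = (2 : ℝ) • v := by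
        rw [two_smul]; abel
      rw [this, smul_smul]
      norm_num
end

section
/- Let (V, e_V) and (W, e_W) be absolute order unit spaces and φ : V → W a surjective linear order isometry. Then φ is unital: φ(e_V) = e_W. -/
/-- An absolute order unit space: an absolutely ordered space whose norm is the order unit
norm determined by an order unit `e`, with closed cone, satisfying
`‖v‖ ≤ max(‖u‖, ‖w‖)` for `u ≤ v ≤ w`, and in which orthogonality coincides with absolute
`∞`-orthogonality on the positive cone. -/
structure AbsOrderUnitSpace (V : Type*) [NormedAddCommGroup V] [NormedSpace ℝ V] extends
    AbsOrderedSpace V where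
  /-- the order unit -/
  e : V
  e_mem : e ∈ P
  cone_closed : IsClosed P
  /-- `e` is an order unit -/
  orderUnit : ∀ v : V, ∃ k : ℝ, 0 < k ∧ k • e + v ∈ P ∧ k • e - v ∈ P
  /-- the norm is the order unit norm determined by `e` -/
  norm_eq : ∀ v : V, ‖v‖ = sInf {k : ℝ | 0 < k ∧ k • e + v ∈ P ∧ k • e - v ∈ P}
  /-- condition (a): `‖v‖ ≤ max (‖u‖, ‖w‖)` whenever `u ≤ v ≤ w` -/
  norm_le_max : ∀ u v w : V, v - u ∈ P → w - v ∈ P → ‖v‖ ≤ max ‖u‖ ‖w‖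
  /-- condition (b): `⊥ = ⊥ᵃ_∞` on the positive cone -/
  perp_iff : ∀ u ∈ P, ∀ v ∈ P,
    (abs (u - v) = u + v ↔
      ∀ u₁ v₁ : V, u₁ ∈ P → u - u₁ ∈ P → v₁ ∈ P → v - v₁ ∈ P →
        ∀ α β : ℝ, ‖α • u₁ + β • v₁‖ = max ‖α • u₁‖ ‖β • v₁‖)

/-- `l_V(v) = inf {‖u‖ : u ∈ V⁺, u + v ∈ V⁺}`. -/
noncomputable def AbsOrderUnitSpace.ell {V : Type*} [NormedAddCommGroup V]
    [NormedSpace ℝ V] (A : AbsOrderUnitSpace V) (v : V) : ℝ :=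
  sInf {r : ℝ | ∃ u ∈ A.P, u + v ∈ A.P ∧ ‖u‖ = r}

namespace AbsOrderUnitSpace

variable {V : Type*} [NormedAddCommGroup V] [NormedSpace ℝ V] (A : AbsOrderUnitSpace V)

lemma zero_mem : (0 : V) ∈ A.P := by
  simpa using A.smul_mem 0 le_rfl A.e A.e_mem

lemma eq_zero_of_mem_of_neg_mem {u : V} (hu : u ∈ A.P) (hnu : -u ∈ A.P) : u = 0 := by
  have h : -u = u := by
    rw [← A.abs_of_mem _ hnu, ← neg_one_smul ℝ u, A.abs_smul, abs_neg, abs_one, one_smul,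
      A.abs_of_mem _ hu]
  linear_combination (norm := module) (-(1 / 2 : ℝ)) • h

lemma smul_e_add_mem_of_le {k k' : ℝ} (hk : k ≤ k') {v : V} (h : k • A.e + v ∈ A.P) :
    k' • A.e + v ∈ A.P := by
  convert A.add_mem _ (A.smul_mem (k' - k) (sub_nonneg.2 hk) _ A.e_mem) _ h using 1
  module

lemma mem_of_forall_pos_smul_e_add_mem {v : V} (h : ∀ ε : ℝ, 0 < ε → ε • A.e + v ∈ A.P) :
    v ∈ A.P := by
  have hcont : Continuous fun ε : ℝ => ε • A.e + v := by fun_prop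
  refine A.cone_closed.mem_of_tendsto (f := fun ε : ℝ => ε • A.e + v)
    (b := nhdsWithin 0 (Set.Ioi 0)) ?_ ?_
  · exact (hcont.tendsto' 0 v (by simp)).mono_left nhdsWithin_le_nhds
  · exact eventually_nhdsWithin_of_forall h

lemma norm_e_le_one : ‖A.e‖ ≤ 1 := by
  rw [A.norm_eq]
  refine csInf_le ⟨0, fun k hk => hk.1.le⟩ ⟨one_pos, ?_, ?_⟩
  · simpa [← two_smul ℝ] using A.smul_mem 2 zero_le_two _ A.e_mem
  · simpa using A.zero_mem

lemma norm_smul_e_sub_mem (u : V) : ‖u‖ • A.e - u ∈ A.P := by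
  refine A.mem_of_forall_pos_smul_e_add_mem fun ε hε => ?_
  have hlt : sInf {k : ℝ | 0 < k ∧ k • A.e + u ∈ A.P ∧ k • A.e - u ∈ A.P} < ‖u‖ + ε := by
    rw [← A.norm_eq]; linarith
  obtain ⟨k, ⟨-, -, hk⟩, hk_lt⟩ := exists_lt_of_csInf_lt (A.orderUnit u) hlt
  rw [sub_eq_add_neg] at hk
  convert A.smul_e_add_mem_of_le hk_lt.le hk using 1
  module

lemma ell_nonempty (v : V) : {r : ℝ | ∃ u ∈ A.P, u + v ∈ A.P ∧ ‖u‖ = r}.Nonempty := by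
  obtain ⟨k, hk, hkv, -⟩ := A.orderUnit v
  exact ⟨_, k • A.e, A.smul_mem k hk.le _ A.e_mem, hkv, rfl⟩

lemma ell_le_norm {u v : V} (hu : u ∈ A.P) (huv : u + v ∈ A.P) : A.ell v ≤ ‖u‖ :=
  csInf_le ⟨0, by rintro r ⟨u, -, -, rfl⟩; exact norm_nonneg u⟩ ⟨u, hu, huv, rfl⟩

lemma smul_e_add_mem_of_ell_lt {v : V} {r : ℝ} (h : A.ell v < r) : r • A.e + v ∈ A.P := by
  obtain ⟨-, ⟨u, hu, huv, rfl⟩, hu_lt⟩ := exists_lt_of_csInf_lt (A.ell_nonempty v) h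
  have : ‖u‖ • A.e + v ∈ A.P := by
    convert A.add_mem _ (A.norm_smul_e_sub_mem u) _ huv using 1
    abel
  exact A.smul_e_add_mem_of_le hu_lt.le this

lemma ell_le_iff {v : V} {r : ℝ} (hr : 0 ≤ r) : A.ell v ≤ r ↔ r • A.e + v ∈ A.P := by
  refine ⟨fun h => A.mem_of_forall_pos_smul_e_add_mem fun ε hε => ?_, fun h => ?_⟩
  · convert A.smul_e_add_mem_of_ell_lt (r := r + ε) (by linarith) using 1
    module
  · calc A.ell v ≤ ‖r • A.e‖ := A.ell_le_norm (A.smul_mem r hr _ A.e_mem) h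
      _ ≤ r := by
        rw [norm_smul, Real.norm_of_nonneg hr]
        exact mul_le_of_le_one_right hr A.norm_e_le_one

lemma smul_e_add_map_mem_iff {W : Type*} [NormedAddCommGroup W] [NormedSpace ℝ W]
    {B : AbsOrderUnitSpace W} {φ : V → W} (hiso : ∀ v, B.ell (φ v) = A.ell v) {r : ℝ}
    (hr : 0 ≤ r) (v : V) : r • B.e + φ v ∈ B.P ↔ r • A.e + v ∈ A.P := by
  rw [← B.ell_le_iff hr, hiso, A.ell_le_iff hr]

end AbsOrderUnitSpace

/-- A surjective linear order isometry between absolute order unit spaces is unital. -/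
theorem orderIsometry_unital {V W : Type*} [NormedAddCommGroup V] [NormedSpace ℝ V]
    [NormedAddCommGroup W] [NormedSpace ℝ W]
    (A : AbsOrderUnitSpace V) (B : AbsOrderUnitSpace W) (φ : V →ₗ[ℝ] W)
    (hsurj : Function.Surjective φ) (hiso : ∀ v : V, B.ell (φ v) = A.ell v) :
    φ A.e = B.e := by
  have map_mem_iff (v : V) : φ v ∈ B.P ↔ v ∈ A.P := by
    simpa using A.smul_e_add_map_mem_iff hiso le_rfl v
  have map_le_e_iff (v : V) : B.e - φ v ∈ B.P ↔ A.e - v ∈ A.P := by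
    simpa [sub_eq_add_neg] using A.smul_e_add_map_mem_iff hiso zero_le_one (-v)
  obtain ⟨x, hx⟩ := hsurj B.e
  have e_le : B.e - φ A.e ∈ B.P := (map_le_e_iff A.e).2 (by simpa using A.zero_mem)
  have e_ge : φ A.e - B.e ∈ B.P := by
    rw [← hx, ← map_sub, map_mem_iff]
    exact (map_le_e_iff x).1 (by simpa [hx] using B.zero_mem)
  exact sub_eq_zero.1 (B.eq_zero_of_mem_of_neg_mem e_ge (by simpa using e_le))
end

section
/- Let A and B be unital JB-algebras and φ : A → B a bijective linear map. Then φ is a Jordan isomorphism if and only if φ is a unital absolute value preserving map, where |x| := (x²)^{1/2}. -/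
/-- A unital JB-algebra: a real Banach space with a commutative bilinear Jordan product
satisfying the Jordan identity and the JB norm conditions, a unit, and an absolute value
`|x| = (x²)^{1/2}` (the unique positive, i.e. square, square root of `x²`). -/
structure JBAlgebra (A : Type*) [NormedAddCommGroup A] [NormedSpace ℝ A]
    [CompleteSpace A] where
  /-- the Jordan product -/
  mul : A → A → A
  comm : ∀ x y, mul x y = mul y x
  add_mul : ∀ x y z, mul (x + y) z = mul x z + mul y z
  smul_mul : ∀ (k : ℝ) (x y : A), mul (k • x) y = k • mul x y
  /-- Jordan identity: `(x ∘ y) ∘ x² = x ∘ (y ∘ x²)` -/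
  jordan : ∀ x y, mul (mul x y) (mul x x) = mul x (mul y (mul x x))
  /-- the unit -/
  one : A
  one_mul : ∀ x, mul one x = x
  norm_mul_le : ∀ x y, ‖mul x y‖ ≤ ‖x‖ * ‖y‖
  norm_sq : ∀ x, ‖mul x x‖ = ‖x‖ ^ 2
  norm_sq_le : ∀ x y, ‖mul x x‖ ≤ ‖mul x x + mul y y‖
  /-- the absolute value `|x| = (x²)^{1/2}` -/
  abs : A → A
  abs_isSq : ∀ x, ∃ y, abs x = mul y y
  abs_sq : ∀ x, mul (abs x) (abs x) = mul x x
  abs_unique : ∀ x z, (∃ y, z = mul y y) → mul z z = mul x x → z = abs x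

namespace JBAlgebra

variable {A : Type*} [NormedAddCommGroup A] [NormedSpace ℝ A] [CompleteSpace A]
variable (J : JBAlgebra A)

lemma mul_add' (x y z : A) : J.mul x (y + z) = J.mul x y + J.mul x z := by
  rw [J.comm, J.add_mul, J.comm y, J.comm z]

lemma mul_smul' (k : ℝ) (x y : A) : J.mul x (k • y) = k • J.mul x y := by
  rw [J.comm, J.smul_mul, J.comm]

lemma zero_mul' (x : A) : J.mul 0 x = 0 := by
  have := J.smul_mul 0 0 x; simpa using this

lemma mul_zero' (x : A) : J.mul x 0 = 0 := by rw [J.comm]; exact J.zero_mul' x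

lemma neg_mul' (x y : A) : J.mul (-x) y = -J.mul x y := by
  have := J.smul_mul (-1) x y; simpa using this

lemma mul_neg' (x y : A) : J.mul x (-y) = -J.mul x y := by
  rw [J.comm, J.neg_mul', J.comm]

lemma sub_mul' (x y z : A) : J.mul (x - y) z = J.mul x z - J.mul y z := by
  rw [sub_eq_add_neg, J.add_mul, J.neg_mul', sub_eq_add_neg]

lemma mul_sub' (x y z : A) : J.mul x (y - z) = J.mul x y - J.mul x z := by
  rw [J.comm, J.sub_mul', J.comm y, J.comm z]

lemma mul_one' (x : A) : J.mul x J.one = x := by rw [J.comm, J.one_mul]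

end JBAlgebra

namespace JBAlgebra

variable {A : Type*} [NormedAddCommGroup A] [NormedSpace ℝ A] [CompleteSpace A]
variable (J : JBAlgebra A)

lemma lin2 (x y c : A) :
    (2:ℝ) • J.mul (J.mul x c) (J.mul x y) + J.mul (J.mul y c) (J.mul x x)
    = (2:ℝ) • J.mul x (J.mul c (J.mul x y)) + J.mul y (J.mul c (J.mul x x)) := by
  have h1 := J.jordan (x + y) c
  have h2 := J.jordan (x - y) c
  simp only [J.add_mul, J.mul_add', J.sub_mul', J.mul_sub'] at h1 h2
  rw [J.comm y x] at h1 h2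
  have h3 : _ = _ := congrArg₂ (· - ·) h1 h2
  abel_nf at h3
  rw [J.jordan y c] at h3
  have h5 : (4 • J.mul (J.mul x c) (J.mul x y) + 2 • J.mul (J.mul y c) (J.mul x x))
      + 2 • J.mul y (J.mul c (J.mul y y))
      = (4 • J.mul x (J.mul c (J.mul x y)) + 2 • J.mul y (J.mul c (J.mul x x)))
      + 2 • J.mul y (J.mul c (J.mul y y)) := by
    calc (4 • J.mul (J.mul x c) (J.mul x y) + 2 • J.mul (J.mul y c) (J.mul x x))
      + 2 • J.mul y (J.mul c (J.mul y y))
        = 4 • J.mul (J.mul x c) (J.mul x y) + (2 • J.mul (J.mul y c) (J.mul x x)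
          + 2 • J.mul y (J.mul c (J.mul y y))) := by abel
      _ = 4 • J.mul x (J.mul c (J.mul x y)) + (2 • J.mul y (J.mul c (J.mul x x))
          + 2 • J.mul y (J.mul c (J.mul y y))) := h3
      _ = _ := by abel
  have h4 := add_right_cancel h5
  have h4' : (4:ℝ) • J.mul (J.mul x c) (J.mul x y) + (2:ℝ) • J.mul (J.mul y c) (J.mul x x)
      = (4:ℝ) • J.mul x (J.mul c (J.mul x y)) + (2:ℝ) • J.mul y (J.mul c (J.mul x x)) := by
    have e : ∀ u : A, (4:ℝ) • u = 4 • u := fun u => by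
      rw [← Nat.cast_smul_eq_nsmul ℝ]; norm_num
    have e2 : ∀ u : A, (2:ℝ) • u = 2 • u := fun u => by
      rw [← Nat.cast_smul_eq_nsmul ℝ]; norm_num
    rw [e, e2, e, e2]; exact h4
  have h6 := congrArg (fun t => (2:ℝ)⁻¹ • t) h4'
  simp only [smul_add, smul_smul] at h6
  norm_num at h6
  exact h6

lemma half_add {u v : A} (h : u + u = v + v) : u = v := by
  have h2 : (2:ℝ) • u = (2:ℝ) • v := by rw [two_smul, two_smul]; exact h
  exact smul_right_injective A (two_ne_zero) h2

lemma comm3 (x y z c : A) :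
    J.mul (J.mul x c) (J.mul z y) + J.mul (J.mul z c) (J.mul x y) + J.mul (J.mul y c) (J.mul x z)
    = J.mul x (J.mul c (J.mul z y)) + J.mul z (J.mul c (J.mul x y)) + J.mul y (J.mul c (J.mul x z)) := by
  have h1 := J.lin2 (x + z) y c
  have h2 := J.lin2 x y c
  have h3 := J.lin2 z y c
  simp only [J.add_mul, J.mul_add', two_smul] at h1 h2 h3
  rw [J.comm z x] at h1
  have h4 : _ = _ := congrArg₂ (· - ·) (congrArg₂ (· - ·) h1 h2) h3
  apply half_add
  abel_nf at h4 ⊢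
  exact h4

set_option linter.unusedSectionVars false

/-- powers: `pw z 0 = 1`, `pw z (n+1) = z ∘ pw z n` -/
def pw (z : A) : ℕ → A
  | 0 => J.one
  | n + 1 => J.mul z (pw z n)

@[simp] lemma pw_zero (z : A) : J.pw z 0 = J.one := rfl
@[simp] lemma pw_succ (z : A) (n : ℕ) : J.pw z (n+1) = J.mul z (J.pw z n) := rfl
lemma pw_one (z : A) : J.pw z 1 = z := by simp [J.mul_one']

/-- power associativity and operator commutativity of powers -/
theorem pw_key (z : A) : ∀ n : ℕ,
    (∀ a b, a + b = n → J.mul (J.pw z a) (J.pw z b) = J.pw z n) ∧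
    (∀ a b c, a + b = n →
      J.mul (J.pw z a) (J.mul (J.pw z b) c) = J.mul (J.pw z b) (J.mul (J.pw z a) c)) := by
  intro n
  induction n using Nat.strong_induction_on with
  | _ n IH =>
  rcases Nat.eq_zero_or_pos n with hn | hn
  · subst hn
    constructor
    · rintro a b hab
      obtain ⟨rfl, rfl⟩ : a = 0 ∧ b = 0 := by omega
      simp [J.one_mul]
    · rintro a b c hab
      obtain ⟨rfl, rfl⟩ : a = 0 ∧ b = 0 := by omega
      rfl
  -- n ≥ 1; commutator recursion
  have hgrec : ∀ a c, 1 ≤ a → a + 1 ≤ n →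
      (J.mul (J.pw z (a+1)) (J.mul (J.pw z (n-(a+1))) c)
        - J.mul (J.pw z (n-(a+1))) (J.mul (J.pw z (a+1)) c))
      = (J.mul (J.pw z a) (J.mul (J.pw z (n-a)) c)
        - J.mul (J.pw z (n-a)) (J.mul (J.pw z a) c))
      + (J.mul z (J.mul (J.pw z (n-1)) c)
        - J.mul (J.pw z (n-1)) (J.mul z c)) := by
    intro a c ha1 han
    have h := J.comm3 z (J.pw z (n-(a+1))) (J.pw z a) c
    have e1 : J.mul z (J.pw z (n-(a+1))) = J.pw z (n-a) := by
      rw [← J.pw_succ]; congr 1; omega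
    have e2 : J.mul (J.pw z a) (J.pw z (n-(a+1))) = J.pw z (n-1) := by
      have := (IH (n-1) (by omega)).1 a (n-(a+1)) (by omega)
      rw [this]
    have e3 : J.mul z (J.pw z a) = J.pw z (a+1) := (J.pw_succ z a).symm
    rw [e1, e2, e3] at h
    rw [J.comm (J.mul z c) (J.pw z (n-1)),
        J.comm (J.mul (J.pw z a) c) (J.pw z (n-a)),
        J.comm (J.mul (J.pw z (n-(a+1))) c) (J.pw z (a+1)),
        J.comm c (J.pw z (n-1)), J.comm c (J.pw z (n-a)),
        J.comm c (J.pw z (a+1))] at h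
    -- h : pw(n-1)(z c) + pw(n-a)(pw a c) + pw(a+1)(pw(n-(a+1)) c)
    --   = z (pw(n-1) c) + pw a (pw(n-a) c) + pw(n-(a+1)) (pw(a+1) c)
    have := sub_eq_zero.mpr h
    rw [← sub_eq_zero]
    rw [← sub_eq_zero] at h ⊢
    abel_nf at h ⊢
    exact h
  -- g a = a • g 1
  have hGk : ∀ a, 1 ≤ a → a ≤ n → ∀ c,
      (J.mul (J.pw z a) (J.mul (J.pw z (n-a)) c)
        - J.mul (J.pw z (n-a)) (J.mul (J.pw z a) c))
      = a • (J.mul z (J.mul (J.pw z (n-1)) c) - J.mul (J.pw z (n-1)) (J.mul z c)) := by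
    intro a
    induction a with
    | zero => omega
    | succ a iha =>
      intro _ hle c
      rcases Nat.eq_zero_or_pos a with rfl | hap
      · simp [J.pw_one, J.mul_one']
      · rw [hgrec a c hap hle, iha hap (by omega) c, succ_nsmul]
  have hg1 : ∀ c, J.mul z (J.mul (J.pw z (n-1)) c)
      - J.mul (J.pw z (n-1)) (J.mul z c) = 0 := by
    intro c
    have h := hGk n (by omega) le_rfl c
    simp only [Nat.sub_self, J.pw_zero, J.one_mul, sub_self] at h
    rw [← Nat.cast_smul_eq_nsmul ℝ] at h
    exact ((smul_eq_zero.mp h.symm).resolve_left (by positivity)).symm ▸ rfl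

  have hcomm : ∀ a b c, a + b = n →
      J.mul (J.pw z a) (J.mul (J.pw z b) c) = J.mul (J.pw z b) (J.mul (J.pw z a) c) := by
    intro a b c hab
    rcases Nat.eq_zero_or_pos a with rfl | hap
    · simp only [J.pw_zero, J.one_mul]
    rcases Nat.eq_zero_or_pos b with rfl | hbp
    · simp only [J.pw_zero, J.one_mul]
    have hb : b = n - a := by omega
    subst hb
    have h := hGk a hap (by omega) c
    rw [hg1 c, smul_zero] at h
    exact sub_eq_zero.mp h
  refine ⟨?_, hcomm⟩
  rintro a b rfl
  rcases Nat.eq_zero_or_pos a with rfl | hap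
  · simp only [J.pw_zero, J.one_mul, Nat.zero_add]
  rcases Nat.eq_zero_or_pos b with rfl | hbp
  · simp only [J.pw_zero, J.mul_one', Nat.add_zero]
  have hb1 : b = (b - 1) + 1 := by omega
  rw [hb1, J.pw_succ]
  have hc : J.mul (J.pw z a) (J.mul z (J.pw z (b-1)))
      = J.mul z (J.mul (J.pw z a) (J.pw z (b-1))) := by
    have hz : (z : A) = J.pw z 1 := (J.pw_one z).symm
    rcases Nat.lt_or_ge (a + 1) (a + b) with hlt | hge
    · have := (IH (a+1) (by omega)).2 a 1 (J.pw z (b-1)) rfl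
      rw [J.pw_one] at this; exact this
    · have hb1' : b = 1 := by omega
      have := hcomm a 1 (J.pw z (b-1)) (by omega)
      rw [J.pw_one] at this; exact this
  rw [hc, (IH (a + (b-1)) (by omega)).1 a (b-1) rfl, ← J.pw_succ]
  congr 1

/-- power associativity -/
lemma pw_mul (z : A) (a b : ℕ) : J.mul (J.pw z a) (J.pw z b) = J.pw z (a+b) :=
  (J.pw_key z (a+b)).1 a b rfl

lemma isBddBilin : IsBoundedBilinearMap ℝ (fun p : A × A => J.mul p.1 p.2) where
  add_left x₁ x₂ y := J.add_mul x₁ x₂ y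
  smul_left k x y := J.smul_mul k x y
  add_right x y₁ y₂ := J.mul_add' x y₁ y₂
  smul_right k x y := J.mul_smul' k x y
  bound := ⟨1, one_pos, fun x y => by simpa using J.norm_mul_le x y⟩

lemma tendsto_mul' {f g : ℕ → A} {a b : A}
    (hf : Filter.Tendsto f Filter.atTop (nhds a))
    (hg : Filter.Tendsto g Filter.atTop (nhds b)) :
    Filter.Tendsto (fun n => J.mul (f n) (g n)) Filter.atTop (nhds (J.mul a b)) :=
  (J.isBddBilin.continuous.tendsto (a, b)).comp (hf.prodMk_nhds hg)

/-- span of powers of `z` -/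
def pspan (z : A) : Submodule ℝ A := Submodule.span ℝ (Set.range (J.pw z))

/-- closed subalgebra generated by `z` (and `1`) -/
def pcl (z : A) : Submodule ℝ A := (J.pspan z).topologicalClosure

lemma pcl_coe (z : A) : (J.pcl z : Set A) = closure (J.pspan z : Set A) := rfl

lemma pw_mem_pspan (z : A) (n : ℕ) : J.pw z n ∈ J.pspan z :=
  Submodule.subset_span ⟨n, rfl⟩

lemma one_mem_pcl (z : A) : J.one ∈ J.pcl z :=
  (J.pspan z).le_topologicalClosure (J.pw_mem_pspan z 0)

lemma self_mem_pcl (z : A) : z ∈ J.pcl z := by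
  have := (J.pspan z).le_topologicalClosure (J.pw_mem_pspan z 1)
  rwa [J.pw_one] at this

lemma mul_mem_pspan {z a b : A} (ha : a ∈ J.pspan z) (hb : b ∈ J.pspan z) :
    J.mul a b ∈ J.pspan z := by
  induction ha, hb using Submodule.span_induction₂ with
  | mem_mem x y hx hy =>
    obtain ⟨p, rfl⟩ := hx; obtain ⟨q, rfl⟩ := hy
    rw [J.pw_mul]; exact J.pw_mem_pspan z _
  | zero_left y hy => rw [J.zero_mul']; exact (J.pspan z).zero_mem
  | zero_right x hx => rw [J.mul_zero']; exact (J.pspan z).zero_mem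
  | add_left x₁ x₂ y _ _ _ h1 h2 => rw [J.add_mul]; exact (J.pspan z).add_mem h1 h2
  | add_right x y₁ y₂ _ _ _ h1 h2 => rw [J.mul_add']; exact (J.pspan z).add_mem h1 h2
  | smul_left k x y _ _ h => rw [J.smul_mul]; exact (J.pspan z).smul_mem k h
  | smul_right k x y _ _ h => rw [J.mul_smul']; exact (J.pspan z).smul_mem k h

lemma assoc_pspan {z : A} : ∀ a ∈ J.pspan z, ∀ b ∈ J.pspan z, ∀ c ∈ J.pspan z,
    J.mul (J.mul a b) c = J.mul a (J.mul b c) := by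
  have A1 : ∀ p q r : ℕ, J.mul (J.mul (J.pw z p) (J.pw z q)) (J.pw z r)
      = J.mul (J.pw z p) (J.mul (J.pw z q) (J.pw z r)) := by
    intro p q r
    rw [J.pw_mul, J.pw_mul, J.pw_mul, J.pw_mul]
    congr 1
    omega
  have A2 : ∀ p q : ℕ, ∀ c ∈ J.pspan z, J.mul (J.mul (J.pw z p) (J.pw z q)) c
      = J.mul (J.pw z p) (J.mul (J.pw z q) c) := by
    intro p q c hc
    induction hc using Submodule.span_induction with
    | mem x hx => obtain ⟨r, rfl⟩ := hx; exact A1 p q r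
    | zero => simp only [J.mul_zero', J.zero_mul']
    | add x y _ _ h1 h2 => simp only [J.mul_add', J.add_mul, h1, h2]
    | smul k x _ h => simp only [J.mul_smul', J.smul_mul, h]
  have A3 : ∀ p : ℕ, ∀ b ∈ J.pspan z, ∀ c ∈ J.pspan z,
      J.mul (J.mul (J.pw z p) b) c = J.mul (J.pw z p) (J.mul b c) := by
    intro p b hb
    induction hb using Submodule.span_induction with
    | mem x hx => obtain ⟨q, rfl⟩ := hx; exact A2 p q
    | zero => intro c _; simp only [J.mul_zero', J.zero_mul']
    | add x y _ _ h1 h2 =>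
      intro c hc
      simp only [J.mul_add', J.add_mul, h1 c hc, h2 c hc]
    | smul k x _ h =>
      intro c hc
      simp only [J.mul_smul', J.smul_mul, h c hc]
  intro a ha
  induction ha using Submodule.span_induction with
  | mem x hx => obtain ⟨p, rfl⟩ := hx; exact A3 p
  | zero => intro b _ c _; simp only [J.mul_zero', J.zero_mul']
  | add x y _ _ h1 h2 =>
    intro b hb c hc
    simp only [J.mul_add', J.add_mul, h1 b hb c hc, h2 b hb c hc]
  | smul k x _ h =>
    intro b hb c hc
    simp only [J.mul_smul', J.smul_mul, h b hb c hc]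

lemma mem_pcl_seq {z a : A} (ha : a ∈ J.pcl z) :
    ∃ f : ℕ → A, (∀ n, f n ∈ J.pspan z) ∧ Filter.Tendsto f Filter.atTop (nhds a) := by
  have : a ∈ closure (J.pspan z : Set A) := ha
  obtain ⟨f, hf, hlim⟩ := mem_closure_iff_seq_limit.mp this
  exact ⟨f, hf, hlim⟩

lemma mul_mem_pcl {z a b : A} (ha : a ∈ J.pcl z) (hb : b ∈ J.pcl z) :
    J.mul a b ∈ J.pcl z := by
  obtain ⟨f, hf, hfl⟩ := J.mem_pcl_seq ha
  obtain ⟨g, hg, hgl⟩ := J.mem_pcl_seq hb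
  have hmem : ∀ n, J.mul (f n) (g n) ∈ J.pcl z := fun n =>
    (J.pspan z).le_topologicalClosure (J.mul_mem_pspan (hf n) (hg n))
  have hcl : IsClosed (J.pcl z : Set A) := (J.pspan z).isClosed_topologicalClosure
  exact hcl.mem_of_tendsto (J.tendsto_mul' hfl hgl) (Filter.Eventually.of_forall hmem)

lemma assoc_pcl {z : A} {a b c : A} (ha : a ∈ J.pcl z) (hb : b ∈ J.pcl z)
    (hc : c ∈ J.pcl z) : J.mul (J.mul a b) c = J.mul a (J.mul b c) := by
  obtain ⟨f, hf, hfl⟩ := J.mem_pcl_seq ha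
  obtain ⟨g, hg, hgl⟩ := J.mem_pcl_seq hb
  obtain ⟨h, hh, hhl⟩ := J.mem_pcl_seq hc
  have e : ∀ n, J.mul (J.mul (f n) (g n)) (h n) = J.mul (f n) (J.mul (g n) (h n)) :=
    fun n => J.assoc_pspan _ (hf n) _ (hg n) _ (hh n)
  exact tendsto_nhds_unique
    (J.tendsto_mul' (J.tendsto_mul' hfl hgl) hhl)
    (by simpa only [e] using J.tendsto_mul' hfl (J.tendsto_mul' hgl hhl))

/-- the square rearrangement we need -/
lemma sq_mul_sq_pcl {z u v : A} (hu : u ∈ J.pcl z) (hv : v ∈ J.pcl z) :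
    J.mul (J.mul u v) (J.mul u v) = J.mul (J.mul u u) (J.mul v v) := by
  have h1 : J.mul (J.mul u v) (J.mul u v) = J.mul u (J.mul v (J.mul u v)) :=
    J.assoc_pcl hu hv (J.mul_mem_pcl hu hv)
  have h2 : J.mul v (J.mul u v) = J.mul (J.mul v u) v := (J.assoc_pcl hv hu hv).symm
  have h3 : J.mul (J.mul v u) v = J.mul (J.mul u v) v := by rw [J.comm v u]
  have h4 : J.mul (J.mul u v) v = J.mul u (J.mul v v) := J.assoc_pcl hu hv hv
  have h5 : J.mul u (J.mul u (J.mul v v)) = J.mul (J.mul u u) (J.mul v v) :=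
    (J.assoc_pcl hu hu (J.mul_mem_pcl hv hv)).symm
  rw [h1, h2, h3, h4, h5]

lemma sq_diff (a b : A) : J.mul a a - J.mul b b = J.mul (a + b) (a - b) := by
  rw [J.add_mul, J.mul_sub', J.mul_sub', J.comm b a]
  abel

lemma sqrt_fixed {z m : A} (hm : m ∈ J.pcl z) (hnorm : ‖m‖ < 1) :
    ∃ s ∈ J.pcl z, J.mul (J.one - s) (J.one - s) = J.one - m := by
  classical
  set r := ‖m‖ with hr
  have hr0 : 0 ≤ r := norm_nonneg m
  have h1r : 0 < 1 - r := by linarith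
  set ρ := 1 - Real.sqrt (1 - r) with hρ
  have hsq : Real.sqrt (1 - r) ^ 2 = 1 - r := Real.sq_sqrt h1r.le
  have hs1 : Real.sqrt (1 - r) ≤ 1 := by
    nlinarith [Real.sqrt_nonneg (1 - r), hsq]
  have hρ0 : 0 ≤ ρ := by simp only [hρ]; linarith
  have hρ1 : ρ < 1 := by
    have : 0 < Real.sqrt (1 - r) := Real.sqrt_pos.mpr h1r
    simp only [hρ]; linarith
  have hρeq : (r + ρ^2) / 2 = ρ := by
    simp only [hρ]; linear_combination hsq / 2
  -- the iteration
  set f : ℕ → A := fun n => Nat.rec (0 : A) (fun _ s => (1/2 : ℝ) • (m + J.mul s s)) n with hf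
  have hf0 : f 0 = 0 := rfl
  have hfs : ∀ n, f (n+1) = (1/2 : ℝ) • (m + J.mul (f n) (f n)) := fun n => rfl
  have hmem : ∀ n, f n ∈ J.pcl z := by
    intro n
    induction n with
    | zero => exact (J.pcl z).zero_mem
    | succ n ih =>
      rw [hfs]
      exact (J.pcl z).smul_mem _ ((J.pcl z).add_mem hm (J.mul_mem_pcl ih ih))
  have hbd : ∀ n, ‖f n‖ ≤ ρ := by
    intro n
    induction n with
    | zero => simpa [hf0] using hρ0
    | succ n ih =>
      rw [hfs, norm_smul]
      have h1 : ‖m + J.mul (f n) (f n)‖ ≤ r + ρ * ρ := by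
        refine (norm_add_le _ _).trans (add_le_add le_rfl ?_)
        exact (J.norm_mul_le _ _).trans (mul_le_mul ih ih (norm_nonneg _) hρ0)
      have : ‖(1/2 : ℝ)‖ = 1/2 := by norm_num
      rw [this]
      nlinarith [hρeq]
  have hcau : ∀ n, ‖f (n+1) - f n‖ ≤ ‖f 1 - f 0‖ * ρ ^ n := by
    intro n
    induction n with
    | zero => simp
    | succ n ih =>
      have e : f (n+2) - f (n+1)
          = (1/2 : ℝ) • J.mul (f (n+1) + f n) (f (n+1) - f n) := by
        rw [hfs (n+1), hfs n, ← smul_sub, ← J.sq_diff]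
        congr 1
        abel
      rw [e, norm_smul]
      have h2 : ‖J.mul (f (n+1) + f n) (f (n+1) - f n)‖
          ≤ (ρ + ρ) * ‖f (n+1) - f n‖ := by
        refine (J.norm_mul_le _ _).trans ?_
        exact mul_le_mul ((norm_add_le _ _).trans (add_le_add (hbd (n+1)) (hbd n)))
          le_rfl (norm_nonneg _) (by linarith)
      have h3 : ‖(1/2 : ℝ)‖ = 1/2 := by norm_num
      rw [h3, pow_succ]
      calc 1/2 * ‖J.mul (f (n+1) + f n) (f (n+1) - f n)‖
          ≤ 1/2 * ((ρ + ρ) * ‖f (n+1) - f n‖) := by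
            exact mul_le_mul_of_nonneg_left h2 (by norm_num)
        _ = ρ * ‖f (n+1) - f n‖ := by ring
        _ ≤ ρ * (‖f 1 - f 0‖ * ρ ^ n) := by
            exact mul_le_mul_of_nonneg_left ih hρ0
        _ = ‖f 1 - f 0‖ * (ρ ^ n * ρ) := by ring
  have hcauchy : CauchySeq f := by
    refine cauchySeq_of_le_geometric ρ (‖f 1 - f 0‖) hρ1 (fun n => ?_)
    rw [dist_eq_norm]
    calc ‖f n - f (n+1)‖ = ‖f (n+1) - f n‖ := by rw [norm_sub_rev]
      _ ≤ ‖f 1 - f 0‖ * ρ ^ n := hcau n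
  obtain ⟨s, hs⟩ := cauchySeq_tendsto_of_complete hcauchy
  have hsmem : s ∈ J.pcl z :=
    (J.pspan z).isClosed_topologicalClosure.mem_of_tendsto hs
      (Filter.Eventually.of_forall hmem)
  have hfix : s = (1/2 : ℝ) • (m + J.mul s s) := by
    have l1 : Filter.Tendsto (fun n => f (n+1)) Filter.atTop (nhds s) :=
      hs.comp (Filter.tendsto_add_atTop_nat 1)
    have l2 : Filter.Tendsto (fun n => (1/2 : ℝ) • (m + J.mul (f n) (f n)))
        Filter.atTop (nhds ((1/2 : ℝ) • (m + J.mul s s))) :=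
      ((tendsto_const_nhds.add (J.tendsto_mul' hs hs)).const_smul _)
    refine tendsto_nhds_unique (by simpa only [hfs] using l1) l2
  refine ⟨s, hsmem, ?_⟩
  have h2s : s + s = m + J.mul s s := by
    have := congrArg (fun t : A => (2:ℝ) • t) hfix
    simp only [smul_smul] at this
    norm_num at this
    rw [two_smul] at this
    exact this
  rw [J.sub_mul', J.mul_sub', J.mul_sub', J.one_mul, J.one_mul, J.mul_one']
  rw [show J.one - s - (s - J.mul s s) = J.one - (s + s) + J.mul s s by abel, h2s]
  abel

lemma one_cases : J.one = 0 ∨ ‖J.one‖ = 1 := by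
  have h := J.norm_sq J.one
  rw [J.one_mul] at h
  rcases eq_or_ne ‖J.one‖ 0 with h0 | h0
  · left; exact norm_eq_zero.mp h0
  · right
    have h1 : ‖J.one‖ * 1 = ‖J.one‖ * ‖J.one‖ := by rw [mul_one]; nlinarith
    exact (mul_left_cancel₀ h0 h1).symm

lemma eq_zero_of_one_eq_zero (h : J.one = 0) (x : A) : x = 0 := by
  have := J.one_mul x
  rw [h, J.zero_mul'] at this
  exact this.symm

lemma sqrt_sq {z w : A} (hw : w ∈ J.pcl z) {c : ℝ} (h : ‖w‖ < c) :
    ∃ u ∈ J.pcl z, J.mul u u = c • J.one - w := by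
  have hc : 0 < c := lt_of_le_of_lt (norm_nonneg w) h
  have hm : (c⁻¹ • w) ∈ J.pcl z := (J.pcl z).smul_mem _ hw
  have hmn : ‖c⁻¹ • w‖ < 1 := by
    rw [norm_smul, norm_inv, Real.norm_eq_abs, abs_of_pos hc]
    rw [inv_mul_lt_one₀ hc]
    exact h
  obtain ⟨s, hs, hsq⟩ := J.sqrt_fixed hm hmn
  refine ⟨Real.sqrt c • (J.one - s), (J.pcl z).smul_mem _
    ((J.pcl z).sub_mem (J.one_mem_pcl z) hs), ?_⟩
  rw [J.smul_mul, J.mul_smul', smul_smul, Real.mul_self_sqrt hc.le, hsq,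
    smul_sub, smul_inv_smul₀ hc.ne']

lemma norm_le_of_sandwich {z : A} {c : ℝ} (hc : 0 ≤ c)
    (h₁ : ∃ u, c • J.one - z = J.mul u u) (h₂ : ∃ v, c • J.one + z = J.mul v v) :
    ‖z‖ ≤ c := by
  rcases J.one_cases with h1 | h1
  · rw [J.eq_zero_of_one_eq_zero h1 z]; simpa using hc
  obtain ⟨u, hu⟩ := h₁
  obtain ⟨v, hv⟩ := h₂
  have hsum : J.mul v v + J.mul u u = (2*c) • J.one := by
    rw [← hu, ← hv]
    rw [show (2*c : ℝ) = c + c by ring, add_smul]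
    abel
  have hsum' : J.mul u u + J.mul v v = (2*c) • J.one := by rw [add_comm]; exact hsum
  have n2c : ‖(2*c : ℝ) • J.one‖ = 2*c := by
    rw [norm_smul, Real.norm_eq_abs, abs_of_nonneg (by linarith), h1, mul_one]
  have na : ‖c • J.one + z‖ ≤ 2*c := by
    rw [hv]; calc ‖J.mul v v‖ ≤ ‖J.mul v v + J.mul u u‖ := J.norm_sq_le v u
      _ = 2*c := by rw [hsum, n2c]
  have nb : ‖c • J.one - z‖ ≤ 2*c := by
    rw [hu]; calc ‖J.mul u u‖ ≤ ‖J.mul u u + J.mul v v‖ := J.norm_sq_le u v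
      _ = 2*c := by rw [hsum', n2c]
  refine le_of_forall_pos_le_add (fun δ hδ => ?_)
  -- square roots in the closed subalgebra generated by z
  have hw1 : (c • J.one + z) ∈ J.pcl z :=
    (J.pcl z).add_mem ((J.pcl z).smul_mem _ (J.one_mem_pcl z)) (J.self_mem_pcl z)
  have hw2 : (c • J.one - z) ∈ J.pcl z :=
    (J.pcl z).sub_mem ((J.pcl z).smul_mem _ (J.one_mem_pcl z)) (J.self_mem_pcl z)
  obtain ⟨u', hu'm, hu'⟩ := J.sqrt_sq hw1 (show ‖c • J.one + z‖ < 2*c + δ by linarith)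
  obtain ⟨v', hv'm, hv'⟩ := J.sqrt_sq hw2 (show ‖c • J.one - z‖ < 2*c + δ by linarith)
  have eu : J.mul u' u' = (c + δ) • J.one - z := by
    rw [hu']; rw [show (2*c+δ : ℝ) = (c + δ) + c by ring, add_smul]; abel
  have ev : J.mul v' v' = (c + δ) • J.one + z := by
    rw [hv']; rw [show (2*c+δ : ℝ) = (c + δ) + c by ring, add_smul]; abel
  set w := J.mul u' v' with hwdef
  have hw : J.mul w w = ((c+δ)^2) • J.one - J.mul z z := by
    rw [hwdef, J.sq_mul_sq_pcl hu'm hv'm, eu, ev]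
    simp only [J.sub_mul', J.mul_add', J.smul_mul, J.mul_smul', J.one_mul, J.mul_one',
      smul_smul, ← pow_two]
    abel
  have key : ‖J.mul z z‖ ≤ (c + δ)^2 := by
    calc ‖J.mul z z‖ ≤ ‖J.mul z z + J.mul w w‖ := J.norm_sq_le z w
      _ = ‖((c+δ)^2) • J.one‖ := by rw [hw]; congr 1; abel
      _ = (c+δ)^2 := by
          rw [norm_smul, Real.norm_eq_abs, abs_of_nonneg (by positivity), h1, mul_one]
  have : ‖z‖^2 ≤ (c+δ)^2 := by rw [← J.norm_sq]; exact key
  nlinarith [norm_nonneg z]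

lemma abs_of_sq (y : A) : J.abs (J.mul y y) = J.mul y y :=
  (J.abs_unique (J.mul y y) (J.mul y y) ⟨y, rfl⟩ rfl).symm

lemma norm_abs (x : A) : ‖J.abs x‖ = ‖x‖ := by
  have h : ‖J.abs x‖^2 = ‖x‖^2 := by
    rw [← J.norm_sq, ← J.norm_sq, J.abs_sq]
  rw [← Real.sqrt_sq (norm_nonneg (J.abs x)), h, Real.sqrt_sq (norm_nonneg x)]

variable {B : Type*} [NormedAddCommGroup B] [NormedSpace ℝ B] [CompleteSpace B]

theorem sq_hom (K : JBAlgebra B) (φ : A →ₗ[ℝ] B)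
    (h1 : φ J.one = K.one) (habs : ∀ x, φ (J.abs x) = K.abs (φ x)) :
    ∀ x, φ (J.mul x x) = K.mul (φ x) (φ x) := by
  -- φ maps squares to squares
  have hsq2sq : ∀ q : A, (∃ y, q = J.mul y y) → ∃ w, φ q = K.mul w w := by
    rintro q ⟨y, rfl⟩
    obtain ⟨w, hw⟩ := K.abs_isSq (φ (J.mul y y))
    exact ⟨w, by rw [← J.abs_of_sq y, habs, hw]⟩
  -- φ is contractive
  have hφnorm : ∀ x : A, ‖φ x‖ ≤ ‖x‖ := by
    intro x
    refine le_of_forall_pos_le_add (fun ε hε => ?_)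
    have hlt : ‖x‖ < ‖x‖ + ε := by linarith
    obtain ⟨u, _, hu⟩ := J.sqrt_sq (J.self_mem_pcl x) hlt
    have hltn : ‖-x‖ < ‖x‖ + ε := by rw [norm_neg]; linarith
    obtain ⟨v, _, hv⟩ := J.sqrt_sq (J.self_mem_pcl (-x)) hltn
    refine K.norm_le_of_sandwich (by positivity) ?_ ?_
    · obtain ⟨w, hw⟩ := hsq2sq (J.mul u u) ⟨u, rfl⟩
      refine ⟨w, ?_⟩
      rw [← hw, hu, map_sub, map_smul, h1]
    · obtain ⟨w, hw⟩ := hsq2sq (J.mul v v) ⟨v, rfl⟩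
      refine ⟨w, ?_⟩
      rw [← hw, hv, map_sub, map_smul, h1, map_neg, sub_neg_eq_add]
  -- the defect
  set D : A → B := fun x => φ (J.mul x x) - K.mul (φ x) (φ x) with hD
  have hDabs : ∀ x, D (J.abs x) = D x := by
    intro x
    simp only [hD]
    rw [J.abs_sq, habs, K.abs_sq]
  have hDshift : ∀ (x : A) (t : ℝ), D (x - t • J.one) = D x := by
    intro x t
    have eA : J.mul (x - t • J.one) (x - t • J.one)
        = J.mul x x - (2*t) • x + (t^2) • J.one := by
      simp only [J.sub_mul', J.mul_sub', J.smul_mul, J.mul_smul', J.mul_one', J.one_mul,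
        smul_smul]
      module
    have eB : K.mul (φ x - t • K.one) (φ x - t • K.one)
        = K.mul (φ x) (φ x) - (2*t) • (φ x) + (t^2) • K.one := by
      simp only [K.sub_mul', K.mul_sub', K.smul_mul, K.mul_smul', K.mul_one', K.one_mul,
        smul_smul]
      module
    have eφ : φ (x - t • J.one) = φ x - t • K.one := by rw [map_sub, map_smul, h1]
    simp only [hD]
    rw [eA, eφ, eB]
    simp only [map_add, map_sub, map_smul, h1]
    abel
  have hDbound : ∀ x, ‖D x‖ ≤ 2 * ‖x‖^2 := by
    intro x
    have b1 : ‖φ (J.mul x x)‖ ≤ ‖x‖^2 := by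
      calc ‖φ (J.mul x x)‖ ≤ ‖J.mul x x‖ := hφnorm _
        _ = ‖x‖^2 := J.norm_sq x
    have b2 : ‖K.mul (φ x) (φ x)‖ ≤ ‖x‖^2 := by
      calc ‖K.mul (φ x) (φ x)‖ = ‖φ x‖^2 := K.norm_sq _
        _ ≤ ‖x‖^2 := by nlinarith [hφnorm x, norm_nonneg (φ x), norm_nonneg x]
    calc ‖D x‖ ≤ ‖φ (J.mul x x)‖ + ‖K.mul (φ x) (φ x)‖ := norm_sub_le _ _
      _ ≤ 2 * ‖x‖^2 := by linarith
  -- folding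
  have hfold : ∀ (x : A) (ε : ℝ), 0 < ε → ∃ x', D x' = D x ∧ ‖x'‖ ≤ ‖x‖/2 + ε := by
    intro x ε hε
    set t := ‖x‖/2 + ε with ht
    set p := J.abs x with hp
    refine ⟨J.abs (p - t • J.one), ?_, ?_⟩
    · rw [hDabs, hDshift, hp, hDabs]
    · rw [J.norm_abs]
      refine J.norm_le_of_sandwich (by positivity) ?_ ?_
      · have hlt : ‖p‖ < 2*t := by
          rw [hp, J.norm_abs]; simp only [ht]; linarith
        obtain ⟨u, _, hu⟩ := J.sqrt_sq (J.self_mem_pcl p) hlt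
        refine ⟨u, ?_⟩
        rw [hu, show (2*t : ℝ) = t + t by ring,
          show ((t+t : ℝ)) • J.one = t • J.one + t • J.one from add_smul t t J.one]
        abel
      · obtain ⟨y, hy⟩ := J.abs_isSq x
        refine ⟨y, ?_⟩
        rw [← hy, ← hp]
        abel
  -- iterate the folding
  have hiter : ∀ (n : ℕ) (x : A) (ε : ℝ), 0 < ε →
      ∃ x', D x' = D x ∧ ‖x'‖ ≤ (1/2)^n * ‖x‖ + 2*ε := by
    intro n
    induction n with
    | zero => intro x ε hε; exact ⟨x, rfl, by simp; linarith⟩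
    | succ n ih =>
      intro x ε hε
      obtain ⟨x', hx'D, hx'n⟩ := ih x ε hε
      obtain ⟨x'', hx''D, hx''n⟩ := hfold x' ε hε
      refine ⟨x'', by rw [hx''D, hx'D], ?_⟩
      calc ‖x''‖ ≤ ‖x'‖/2 + ε := hx''n
        _ ≤ ((1/2)^n * ‖x‖ + 2*ε)/2 + ε := by linarith
        _ = (1/2)^(n+1) * ‖x‖ + 2*ε := by ring
  -- conclude D = 0
  have hDzero : ∀ x, D x = 0 := by
    intro x
    by_contra hne
    have hpos : 0 < ‖D x‖ := norm_pos_iff.mpr hne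
    set ε := min 1 (‖D x‖ / 100) with hε
    have hε0 : 0 < ε := by
      apply lt_min one_pos; positivity
    obtain ⟨n, hn⟩ : ∃ n : ℕ, (1/2:ℝ)^n * ‖x‖ ≤ ε := by
      obtain ⟨n, hn⟩ := exists_pow_lt_of_lt_one (show (0:ℝ) < ε / (‖x‖ + 1) by positivity)
        (show (1/2 : ℝ) < 1 by norm_num)
      refine ⟨n, ?_⟩
      have h2 : (1/2:ℝ)^n * ‖x‖ ≤ (ε / (‖x‖ + 1)) * ‖x‖ := by
        apply mul_le_mul_of_nonneg_right hn.le (norm_nonneg x)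
      have h3 : (ε / (‖x‖ + 1)) * ‖x‖ ≤ ε := by
        rw [div_mul_eq_mul_div, div_le_iff₀ (by positivity)]
        nlinarith [norm_nonneg x, hε0]
      linarith
    obtain ⟨x', hx'D, hx'n⟩ := hiter n x ε hε0
    have hb : ‖D x‖ ≤ 2 * (3*ε)^2 := by
      rw [← hx'D]
      calc ‖D x'‖ ≤ 2 * ‖x'‖^2 := hDbound x'
        _ ≤ 2 * (3*ε)^2 := by nlinarith [norm_nonneg x']
    have hε1 : ε ≤ 1 := min_le_left _ _
    have hε2 : ε ≤ ‖D x‖ / 100 := min_le_right _ _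
    nlinarith
  intro x
  have := hDzero x
  simp only [hD] at this
  have := sub_eq_zero.mp this
  exact this

theorem polarization (x y : A) :
    J.mul x y = (1/2 : ℝ) • (J.mul (x+y) (x+y) - J.mul x x - J.mul y y) := by
  simp only [J.add_mul, J.mul_add']
  rw [J.comm y x]
  module

end JBAlgebra

/-- A bijective linear map between unital JB-algebras is a Jordan isomorphism if and only
if it is a unital absolute value preserving map. -/
theorem jordanIso_iff_unital_absPreserving {A B : Type*}
    [NormedAddCommGroup A] [NormedSpace ℝ A] [CompleteSpace A]
    [NormedAddCommGroup B] [NormedSpace ℝ B] [CompleteSpace B]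
    (J : JBAlgebra A) (K : JBAlgebra B) (φ : A →ₗ[ℝ] B)
    (hbij : Function.Bijective φ) :
    (∀ x y : A, φ (J.mul x y) = K.mul (φ x) (φ y)) ↔
      (φ J.one = K.one ∧ ∀ x : A, φ (J.abs x) = K.abs (φ x)) := by
  constructor
  · intro hm
    have h1 : φ J.one = K.one := by
      have he : ∀ b : B, K.mul (φ J.one) b = b := by
        intro b
        obtain ⟨a, rfl⟩ := hbij.2 b
        rw [← hm, J.one_mul]
      calc φ J.one = K.mul K.one (φ J.one) := (K.one_mul _).symm
        _ = K.mul (φ J.one) K.one := K.comm _ _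
        _ = K.one := he K.one
    refine ⟨h1, fun x => ?_⟩
    refine K.abs_unique (φ x) (φ (J.abs x)) ?_ ?_
    · obtain ⟨y, hy⟩ := J.abs_isSq x
      exact ⟨φ y, by rw [hy, hm]⟩
    · rw [← hm, J.abs_sq, hm]
  · rintro ⟨h1, habs⟩ x y
    have hsq := J.sq_hom K φ h1 habs
    rw [J.polarization x y, map_smul, map_sub, map_sub, hsq, hsq, hsq, map_add,
      ← K.polarization (φ x) (φ y)]
end

section
/- Let V and W be absolute order unit spaces and φ : V → W an absolute value preserving linear map such that φ(e_V) is an order projection in W. If u, v ∈ V⁺ are absolutely compatible (|u − v| + |e_V − u − v| = e_V), then φ(u) and φ(v) are absolutely compatible in W: |φ(u) − φ(v)| + |e_W − φ(u) − φ(v)| = e_W. -/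
/-- An absolute value preserving linear map whose value at the unit is an order projection
preserves absolute compatibility of positive elements. -/
theorem absPreserving_preserves_absCompatible {V W : Type*} [NormedAddCommGroup V]
    [NormedSpace ℝ V] [NormedAddCommGroup W] [NormedSpace ℝ W]
    (A : AbsOrderUnitSpace V) (B : AbsOrderUnitSpace W) (φ : V →ₗ[ℝ] W)
    (hφ : ∀ v : V, φ (A.abs v) = B.abs (φ v))
    (hproj₀ : φ A.e ∈ B.P) (hproj₁ : B.e - φ A.e ∈ B.P)
    (hproj : B.abs (φ A.e - (B.e - φ A.e)) = φ A.e + (B.e - φ A.e))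
    (u v : V) (hu : u ∈ A.P) (hv : v ∈ A.P)
    (hcomp : A.abs (u - v) + A.abs (A.e - u - v) = A.e) :
    B.abs (φ u - φ v) + B.abs (B.e - φ u - φ v) = B.e := by

  have habsneg : ∀ w : W, B.abs (-w) = B.abs w := by
    intro w
    have h := B.abs_smul (-1) w
    rw [neg_one_smul] at h
    simpa using h
  have h1 : φ (A.abs (u - v)) = B.abs (φ u - φ v) := by rw [hφ, map_sub]
  have h2 : φ (A.abs (A.e - u - v)) = B.abs (φ A.e - φ u - φ v) := by
    rw [hφ, map_sub, map_sub]
  have hφc : B.abs (φ u - φ v) + B.abs (φ A.e - φ u - φ v) = φ A.e := by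
    rw [← h1, ← h2, ← map_add, hcomp]
  set p := φ A.e with hp
  set q := B.e - φ A.e with hq
  set x := p - φ u - φ v with hx
  have habsx : B.abs x = p - B.abs (φ u - φ v) := by
    rw [eq_sub_iff_add_eq, add_comm]; exact hφc
  have hple : p - B.abs x ∈ B.P := by
    rw [habsx, sub_sub_cancel]; exact B.abs_mem (φ u - φ v)
  have hqp : B.abs (q - p) = q + p := by
    rw [show q - p = -(p - q) by abel, habsneg, hproj, add_comm]
  have hqabsx : B.abs (q - B.abs x) = q + B.abs x :=
    B.axiom_d q p (B.abs x) hqp (B.abs_mem x) hple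
  set xp := (1/2 : ℝ) • (B.abs x + x) with hxp
  set xm := (1/2 : ℝ) • (B.abs x - x) with hxm
  have hxpP : xp ∈ B.P := B.smul_mem _ (by norm_num) _ (B.abs_add_mem x)
  have hxmP : xm ∈ B.P := B.smul_mem _ (by norm_num) _ (B.abs_sub_mem x)
  have hsum : xp + xm = B.abs x := by rw [hxp, hxm]; module
  have hxmxp : B.abs (xm - xp) = xm + xp := by
    rw [show xm - xp = -x by rw [hxp, hxm]; module, habsneg, ← hsum]; abel
  have hxmq : B.abs (xm - q) = xm + q := by
    have hd : B.abs x - xm = xp := by rw [← hsum]; abel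
    have h3 : B.abs (q - xm) = q + xm :=
      B.axiom_d q (B.abs x) xm hqabsx hxmP (by rw [hd]; exact hxpP)
    rw [show xm - q = -(q - xm) by abel, habsneg, h3, add_comm]
  have he := B.axiom_e₁ xm xp q hxmxp hxmq
  have habsxpq : B.abs (xp + q) = xp + q := B.abs_of_mem _ (B.add_mem _ hxpP _ hproj₁)
  rw [habsxpq, show xm - (xp + q) = -(x + q) by rw [hxp, hxm]; module, habsneg] at he
  have key : B.abs (x + q) = B.abs x + q := by rw [he, ← hsum]; abel
  rw [show B.e - φ u - φ v = x + q by rw [hx, hq]; abel, key, ← add_assoc, hφc, hq]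
  abel
end

section
/- Let (V, {Mₙ(V)⁺}, {|·|_{m,n}}) be an absolutely matrix ordered space. For any v ∈ M_{m,n}(V), the matrix [[|v*|_{n,m}, v],[v*, |v|_{m,n}]] belongs to M_{m+n}(V)⁺, and |[[0_m, v],[v*, 0_n]]|_{m+n} = |v*|_{n,m} ⊕ |v|_{m,n}. -/
open scoped Matrix

/-- Left multiplication of a matrix over `V` by a scalar matrix: `(α v) i j = ∑ k, α i k • v k j`. -/
def matSMulL {V : Type*} [AddCommGroup V] [Module ℂ V] {r m n : ℕ}
    (α : Matrix (Fin r) (Fin m) ℂ) (v : Matrix (Fin m) (Fin n) V) :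
    Matrix (Fin r) (Fin n) V :=
  fun i j => ∑ k, α i k • v k j

/-- Right multiplication of a matrix over `V` by a scalar matrix. -/
def matSMulR {V : Type*} [AddCommGroup V] [Module ℂ V] {m n s : ℕ}
    (v : Matrix (Fin m) (Fin n) V) (β : Matrix (Fin n) (Fin s) ℂ) :
    Matrix (Fin m) (Fin s) V :=
  fun i j => ∑ k, β k j • v i k

/-- The (L2) operator norm of a complex scalar matrix. -/
noncomputable def matOpNorm {r m : ℕ} (α : Matrix (Fin r) (Fin m) ℂ) : ℝ :=
  ‖LinearMap.toContinuousLinearMap (Matrix.toEuclideanLin α)‖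

/-- An absolutely matrix ordered space: a matrix ordered `*`-vector space `V` together with
absolute value maps `|·|_{m,n} : M_{m,n}(V) → Mₙ(V)⁺` satisfying conditions (1), (2), (3). -/
structure AbsMatrixOrderedSpace (V : Type*) [AddCommGroup V] [Module ℂ V]
    [StarAddMonoid V] [StarModule ℂ V] where
  /-- the matrix cones -/
  P : ∀ n : ℕ, Set (Matrix (Fin n) (Fin n) V)
  P_sa : ∀ {n : ℕ}, ∀ a ∈ P n, aᴴ = a
  P_add : ∀ {n : ℕ}, ∀ a ∈ P n, ∀ b ∈ P n, a + b ∈ P n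
  P_smul : ∀ {n : ℕ} (k : ℝ), 0 ≤ k → ∀ a ∈ P n, (k : ℂ) • a ∈ P n
  /-- compatibility of the cones: `α* v α ∈ M_m(V)⁺` for `v ∈ Mₙ(V)⁺`, `α ∈ Mₙ,ₘ` -/
  P_conj : ∀ {n m : ℕ}, ∀ v ∈ P n, ∀ α : Matrix (Fin n) (Fin m) ℂ,
    matSMulR (matSMulL αᴴ v) α ∈ P m
  /-- the absolute value maps `|·|_{m,n}` -/
  abs : ∀ {m n : ℕ}, Matrix (Fin m) (Fin n) V → Matrix (Fin n) (Fin n) V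
  abs_mem : ∀ {m n : ℕ} (v : Matrix (Fin m) (Fin n) V), abs v ∈ P n
  -- (1) each `(Mₙ(V)_sa, Mₙ(V)⁺, |·|ₙ)` is an absolutely ordered space:
  abs_of_mem : ∀ {n : ℕ}, ∀ a ∈ P n, abs a = a
  abs_add_mem : ∀ {n : ℕ} (a : Matrix (Fin n) (Fin n) V), aᴴ = a → abs a + a ∈ P n
  abs_sub_mem : ∀ {n : ℕ} (a : Matrix (Fin n) (Fin n) V), aᴴ = a → abs a - a ∈ P n
  abs_smul_real : ∀ {n : ℕ} (k : ℝ) (a : Matrix (Fin n) (Fin n) V), aᴴ = a →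
    abs ((k : ℂ) • a) = ((|k| : ℝ) : ℂ) • abs a
  axiom_d : ∀ {n : ℕ} (u v w : Matrix (Fin n) (Fin n) V), uᴴ = u → vᴴ = v → wᴴ = w →
    abs (u - v) = u + v → w ∈ P n → v - w ∈ P n → abs (u - w) = u + w
  axiom_e₁ : ∀ {n : ℕ} (u v w : Matrix (Fin n) (Fin n) V), uᴴ = u → vᴴ = v → wᴴ = w →
    abs (u - v) = u + v → abs (u - w) = u + w → abs (u - abs (v + w)) = u + abs (v + w)
  axiom_e₂ : ∀ {n : ℕ} (u v w : Matrix (Fin n) (Fin n) V), uᴴ = u → vᴴ = v → wᴴ = w →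
    abs (u - v) = u + v → abs (u - w) = u + w → abs (u - abs (v - w)) = u + abs (v - w)
  /-- (2): `|α v β|_{r,s} ≤ ‖α‖ ⬝ ||v|_{m,n} β|_{n,s}` -/
  abs_mul_le : ∀ {m n r s : ℕ} (v : Matrix (Fin m) (Fin n) V)
    (α : Matrix (Fin r) (Fin m) ℂ) (β : Matrix (Fin n) (Fin s) ℂ),
    ((matOpNorm α : ℂ) • abs (matSMulR (abs v) β)) - abs (matSMulR (matSMulL α v) β) ∈ P s
  /-- (3): `|v ⊕ w| = |v| ⊕ |w|` -/
  abs_dirSum : ∀ {m n r s : ℕ} (v : Matrix (Fin m) (Fin n) V) (w : Matrix (Fin r) (Fin s) V),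
    abs ((Matrix.reindex finSumFinEquiv finSumFinEquiv) (Matrix.fromBlocks v 0 0 w)) =
      (Matrix.reindex finSumFinEquiv finSumFinEquiv) (Matrix.fromBlocks (abs v) 0 0 (abs w))

/-! `[[0, v], [v*, 0]]` is the block swap `[[0, 1], [1, 0]]` applied to `v* ⊕ v`. The block swap
is a scalar isometry, and isometries preserve `|·|`: condition (2) gives `|αw| ≤ ‖α‖ |w| ≤ |w|`,
and applied to `α*` and `αw` it gives the reverse inequality. So `|[[0, v], [v*, 0]]| = |v* ⊕ v|
= |v*| ⊕ |v|` by (3), and adding this to the self-adjoint `[[0, v], [v*, 0]]` gives the positive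
matrix `[[|v*|, v], [v*, |v|]]`. -/

open scoped Matrix.Norms.L2Operator

lemma matOpNorm_eq_norm {r m : ℕ} (α : Matrix (Fin r) (Fin m) ℂ) : matOpNorm α = ‖α‖ := rfl

lemma matOpNorm_le_one_of_conjTranspose_mul_self_eq_one {r m : ℕ}
    {α : Matrix (Fin r) (Fin m) ℂ} (hα : αᴴ * α = 1) : matOpNorm α ≤ 1 := by
  have h : ‖α‖ * ‖α‖ ≤ 1 := by
    rw [← Matrix.l2_opNorm_conjTranspose_mul_self, hα, Matrix.cstar_norm_def, map_one]
    exact ContinuousLinearMap.norm_id_le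
  rw [matOpNorm_eq_norm]
  nlinarith [norm_nonneg α]

lemma matOpNorm_conjTranspose {r m : ℕ} (α : Matrix (Fin r) (Fin m) ℂ) :
    matOpNorm αᴴ = matOpNorm α :=
  Matrix.l2_opNorm_conjTranspose α

section MatSMul

variable {V : Type*} [AddCommGroup V] [Module ℂ V]

lemma matSMulL_matSMulL {p r m n : ℕ} (β : Matrix (Fin p) (Fin r) ℂ)
    (α : Matrix (Fin r) (Fin m) ℂ) (v : Matrix (Fin m) (Fin n) V) :
    matSMulL β (matSMulL α v) = matSMulL (β * α) v := by
  ext i j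
  simp only [matSMulL, Finset.smul_sum, smul_smul, Matrix.mul_apply, Finset.sum_smul]
  exact Finset.sum_comm

lemma matSMulL_one {m n : ℕ} (v : Matrix (Fin m) (Fin n) V) : matSMulL 1 v = v := by
  ext i j
  simp [matSMulL, Matrix.one_apply, ite_smul]

lemma matSMulR_one {m n : ℕ} (v : Matrix (Fin m) (Fin n) V) : matSMulR v 1 = v := by
  ext i j
  simp [matSMulR, Matrix.one_apply, ite_smul]

end MatSMul

namespace AbsMatrixOrderedSpace

variable {V : Type*} [AddCommGroup V] [Module ℂ V] [StarAddMonoid V] [StarModule ℂ V]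
  (A : AbsMatrixOrderedSpace V)

lemma abs_neg {n : ℕ} {a : Matrix (Fin n) (Fin n) V} (ha : aᴴ = a) : A.abs (-a) = A.abs a := by
  simpa using A.abs_smul_real (-1) a ha

lemma eq_of_sub_mem_of_sub_mem {n : ℕ} {x y : Matrix (Fin n) (Fin n) V}
    (hxy : x - y ∈ A.P n) (hyx : y - x ∈ A.P n) : x = y := by
  have hneg : x - y = -(x - y) :=
    calc x - y = A.abs (x - y) := (A.abs_of_mem _ hxy).symm
      _ = A.abs (-(x - y)) := (A.abs_neg (A.P_sa _ hxy)).symm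
      _ = A.abs (y - x) := by rw [neg_sub]
      _ = y - x := A.abs_of_mem _ hyx
      _ = -(x - y) := (neg_sub x y).symm
  have htwo : (2 : ℂ) • (x - y) = 0 := by
    rw [two_smul]
    nth_rewrite 2 [hneg]
    exact add_neg_cancel _
  simpa [sub_eq_zero] using htwo

lemma sub_mem_of_smul_sub_mem {n : ℕ} {a b : Matrix (Fin n) (Fin n) V} (ha : a ∈ A.P n)
    {c : ℝ} (hc : c ≤ 1) (h : (c : ℂ) • a - b ∈ A.P n) : a - b ∈ A.P n := by
  have key : ((1 - c : ℝ) : ℂ) • a + ((c : ℂ) • a - b) = a - b := by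
    push_cast
    rw [sub_smul, one_smul]
    abel
  simpa only [key] using A.P_add _ (A.P_smul (1 - c) (by linarith) a ha) _ h

lemma abs_sub_abs_matSMulL_mem {m n r : ℕ} (v : Matrix (Fin m) (Fin n) V)
    {α : Matrix (Fin r) (Fin m) ℂ} (hα : matOpNorm α ≤ 1) :
    A.abs v - A.abs (matSMulL α v) ∈ A.P n := by
  have h := A.abs_mul_le v α (1 : Matrix (Fin n) (Fin n) ℂ)
  rw [matSMulR_one, matSMulR_one, A.abs_of_mem _ (A.abs_mem v)] at h
  exact A.sub_mem_of_smul_sub_mem (A.abs_mem v) hα h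

theorem abs_matSMulL_of_conjTranspose_mul_self_eq_one {m n r : ℕ}
    (v : Matrix (Fin m) (Fin n) V) {α : Matrix (Fin r) (Fin m) ℂ} (hα : αᴴ * α = 1) :
    A.abs (matSMulL α v) = A.abs v := by
  have hnorm := matOpNorm_le_one_of_conjTranspose_mul_self_eq_one hα
  refine A.eq_of_sub_mem_of_sub_mem ?_ (A.abs_sub_abs_matSMulL_mem v hnorm)
  have h := A.abs_sub_abs_matSMulL_mem (matSMulL α v) ((matOpNorm_conjTranspose α).trans_le hnorm)
  rwa [matSMulL_matSMulL, hα, matSMulL_one] at h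

end AbsMatrixOrderedSpace

def blockSwap (m n : ℕ) : Matrix (Fin (m + n)) (Fin (n + m)) ℂ :=
  Matrix.reindex finSumFinEquiv finSumFinEquiv
    (Matrix.fromBlocks (0 : Matrix (Fin m) (Fin n) ℂ) 1 1 0)

lemma blockSwap_conjTranspose_mul_self (m n : ℕ) : (blockSwap m n)ᴴ * blockSwap m n = 1 := by
  simp [blockSwap, Matrix.fromBlocks_conjTranspose,
    Matrix.submatrix_mul_equiv, Matrix.fromBlocks_multiply, Matrix.fromBlocks_one]

lemma matSMulL_blockSwap {V : Type*} [AddCommGroup V] [Module ℂ V] {m n p q : ℕ}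
    (a : Matrix (Fin n) (Fin p) V) (b : Matrix (Fin n) (Fin q) V)
    (c : Matrix (Fin m) (Fin p) V) (d : Matrix (Fin m) (Fin q) V) :
    matSMulL (blockSwap m n) (Matrix.reindex finSumFinEquiv finSumFinEquiv
        (Matrix.fromBlocks a b c d)) =
      Matrix.reindex finSumFinEquiv finSumFinEquiv (Matrix.fromBlocks c d a b) := by
  ext i j
  obtain ⟨i, rfl⟩ := finSumFinEquiv.surjective i
  obtain ⟨j, rfl⟩ := finSumFinEquiv.surjective j
  simp only [matSMulL, blockSwap, Matrix.reindex_apply, Matrix.submatrix_apply,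
    Equiv.symm_apply_apply, ← finSumFinEquiv.sum_comp, Fintype.sum_sum_type]
  rcases i with i | i <;> rcases j with j | j <;> simp [Matrix.one_apply, ite_smul]

/-- For any `v ∈ M_{m,n}(V)`, the matrix `[[|v*|, v],[v*, |v|]]` is positive and
`|[[0, v],[v*, 0]]| = |v*| ⊕ |v|`. -/
theorem abs_offDiagonal_block {V : Type*} [AddCommGroup V] [Module ℂ V]
    [StarAddMonoid V] [StarModule ℂ V] (A : AbsMatrixOrderedSpace V)
    {m n : ℕ} (v : Matrix (Fin m) (Fin n) V) :
    (Matrix.reindex finSumFinEquiv finSumFinEquiv)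
        (Matrix.fromBlocks (A.abs vᴴ) v vᴴ (A.abs v)) ∈ A.P (m + n) ∧
    A.abs ((Matrix.reindex finSumFinEquiv finSumFinEquiv)
        (Matrix.fromBlocks 0 v vᴴ 0)) =
      (Matrix.reindex finSumFinEquiv finSumFinEquiv)
        (Matrix.fromBlocks (A.abs vᴴ) 0 0 (A.abs v)) := by
  set w := Matrix.reindex finSumFinEquiv finSumFinEquiv (Matrix.fromBlocks 0 v vᴴ 0) with hw
  have habs : A.abs w = Matrix.reindex finSumFinEquiv finSumFinEquiv
      (Matrix.fromBlocks (A.abs vᴴ) 0 0 (A.abs v)) := by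
    rw [hw, ← matSMulL_blockSwap vᴴ 0 0 v,
      A.abs_matSMulL_of_conjTranspose_mul_self_eq_one _ (blockSwap_conjTranspose_mul_self m n),
      A.abs_dirSum]
  have hsa : wᴴ = w := by
    simp [hw, Matrix.fromBlocks_conjTranspose]
  have hsum : A.abs w + w = Matrix.reindex finSumFinEquiv finSumFinEquiv
      (Matrix.fromBlocks (A.abs vᴴ) v vᴴ (A.abs v)) := by
    have hblocks : Matrix.fromBlocks (A.abs vᴴ) v vᴴ (A.abs v) =
        Matrix.fromBlocks (A.abs vᴴ) 0 0 (A.abs v) + Matrix.fromBlocks 0 v vᴴ 0 := by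
      simp [Matrix.fromBlocks_add]
    rw [habs, hblocks]
    rfl
  exact ⟨hsum ▸ A.abs_add_mem w hsa, habs⟩
end
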